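/- Let F ∈ W[[t-1]] be a power series whose associated measure is supported on ℤ_p^×, and let j be a negative integer. Then the limit θ^j F := lim_{i→∞} θ^{j+(p-1)p^i} F exists in W[[t-1]] with respect to the p-adic topology, where θ = t·d/dt. -/

import Mathlib

/-!
Under the Amice transform `F ↔ μ`, `θ` corresponds to multiplying the measure by `x`, so the
`k`-th coefficient of `θ^N F` is `∫ x^N C(x, k) dμ`. Since `μ` lives on `ℤ_p^×`, only units
matter, and for a unit `x` Euler's congruence `x^((p-1)p^i) ≡ 1 mod p^(i+1)` makes the
integrands for consecutive exponents `j + (p-1)p^i` uniformly `p^-(i+1)`-close. The integrands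
therefore form a Cauchy sequence in `C(ℤ_p, W)`, and continuity of `μ` carries its limit to
the coefficients.
-/

open PadicInt PowerSeries Filter

/-- Binomial coefficient function as a continuous map with values in `W`. -/
noncomputable def binomMap (p : ℕ) [Fact p.Prime] (W : Type*) [NormedCommRing W]
    [Algebra ℤ_[p] W] (hca : Continuous (algebraMap ℤ_[p] W)) (n : ℕ) : C(ℤ_[p], W) :=
  (⟨algebraMap ℤ_[p] W, hca⟩ : C(ℤ_[p], W)).comp
    ⟨fun x => Ring.choose x n, PadicInt.continuous_choose n⟩

/-- The operator `θ = t·d/dt` on `W[[T]]` with `t = 1 + T`. -/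
noncomputable def theta (W : Type*) [CommRing W] (F : PowerSeries W) : PowerSeries W :=
  (1 + PowerSeries.X) * F.derivativeFun

theorem Ring.succ_nsmul_choose_succ_add_nsmul_choose {R : Type*} [CommRing R] [BinomialRing R]
    (r : R) (k : ℕ) :
    (k + 1) • Ring.choose r (k + 1) + k • Ring.choose r k = r * Ring.choose r k := by
  have h := Ring.choose_smul_choose r (Nat.le_succ k)
  rw [Nat.choose_succ_self_right, show k.succ - k = 1 by omega, Ring.choose_one_right] at h
  rw [h, nsmul_eq_mul]
  ring

theorem coeff_theta {R : Type*} [CommRing R] (F : R⟦X⟧) (k : ℕ) :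
    coeff k (theta R F) = (k + 1) • coeff (k + 1) F + k • coeff k F := by
  rw [show theta R F = (1 + X) * d⁄dX R F from rfl, add_mul, one_mul, map_add, coeff_derivative]
  cases k with
  | zero => simp
  | succ n =>
    rw [coeff_succ_X_mul, coeff_derivative, nsmul_eq_mul, nsmul_eq_mul]
    push_cast
    ring

namespace PadicInt

variable {p : ℕ} [Fact p.Prime]

theorem toZMod_eq_zero_iff_norm_lt_one (x : ℤ_[p]) : toZMod x = 0 ↔ ‖x‖ < 1 := by
  rw [← RingHom.mem_ker, ker_toZMod, IsLocalRing.mem_maximalIdeal, mem_nonunits]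

theorem isClopen_setOf_toZMod_eq_zero : IsClopen {x : ℤ_[p] | toZMod x = 0} := by
  convert IsUltrametricDist.isClopen_ball (0 : ℤ_[p]) 1 using 1
  ext x
  exact (toZMod_eq_zero_iff_norm_lt_one x).trans mem_ball_zero_iff.symm

theorem pow_dvd_pow_sub_one_mul_pow_mul_sub_one {x : ℤ_[p]} (hx : toZMod x ≠ 0) (m c : ℕ) :
    (p : ℤ_[p]) ^ (m + 1) ∣ x ^ ((p - 1) * p ^ m * c) - 1 := by
  have hfermat : (p : ℤ_[p]) ∣ x ^ (p - 1) - 1 := by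
    rw [← norm_lt_one_iff_dvd, ← toZMod_eq_zero_iff_norm_lt_one, map_sub, map_pow, map_one,
      ZMod.pow_card_sub_one_eq_one hx, sub_self]
  have heuler := dvd_sub_pow_of_dvd_sub hfermat m
  rw [one_pow, ← pow_mul] at heuler
  simpa only [one_pow, ← pow_mul] using heuler.trans (sub_dvd_pow_sub_pow _ 1 c)

theorem norm_pow_add_mul_sub_pow_mul_le {x : ℤ_[p]} (hx : toZMod x ≠ 0) (y : ℤ_[p])
    (N m c : ℕ) :
    ‖x ^ (N + (p - 1) * p ^ m * c) * y - x ^ N * y‖ ≤ (p : ℝ)⁻¹ ^ (m + 1) := by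
  rw [inv_pow, ← zpow_natCast, ← zpow_neg, norm_le_pow_iff_mem_span_pow,
    Ideal.mem_span_singleton, show x ^ (N + (p - 1) * p ^ m * c) * y - x ^ N * y
      = x ^ N * y * (x ^ ((p - 1) * p ^ m * c) - 1) by ring]
  exact dvd_mul_of_dvd_right (pow_dvd_pow_sub_one_mul_pow_mul_sub_one hx m c) _

end PadicInt

theorem toNat_add_sub_one_mul_pow_succ {p : ℕ} (hp : 2 ≤ p) {j : ℤ} {i : ℕ} (hi : -j ≤ i) :
    (j + ((p : ℤ) - 1) * (p : ℤ) ^ (i + 1)).toNat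
      = (j + ((p : ℤ) - 1) * (p : ℤ) ^ i).toNat + (p - 1) * p ^ i * (p - 1) := by
  have hi_lt : (i : ℤ) < (p : ℤ) ^ i := by exact_mod_cast Nat.lt_pow_self hp
  have hp1 : (1 : ℤ) ≤ (p : ℤ) - 1 := by omega
  have hpow : (p : ℤ) ^ i ≤ (p : ℤ) ^ (i + 1) :=
    pow_le_pow_right₀ (by omega) (Nat.le_succ i)
  have h0 : 0 ≤ j + ((p : ℤ) - 1) * (p : ℤ) ^ i := by nlinarith
  have h1 : 0 ≤ j + ((p : ℤ) - 1) * (p : ℤ) ^ (i + 1) := by nlinarith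
  zify [Nat.one_le_of_lt hp]
  rw [Int.toNat_of_nonneg h0, Int.toNat_of_nonneg h1]
  ring

section UnitsIndicator

variable (p : ℕ) [Fact p.Prime] (W : Type*) [NormedCommRing W]

noncomputable def unitsIndicator : C(ℤ_[p], W) :=
  ⟨fun x => if toZMod x = 0 then 0 else 1, continuous_const.if (fun a ha => by
    rw [isClopen_setOf_toZMod_eq_zero.frontier_eq] at ha
    exact absurd ha (Set.notMem_empty a)) continuous_const⟩

variable {p W} in
theorem apply_eq_apply_unitsIndicator_mul (μ : C(ℤ_[p], W) →L[W] W)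
    (hsupp : ∀ (φ Ψ : C(ℤ_[p], W)),
      (∀ x : ℤ_[p], Ψ x = if toZMod x = 0 then φ x else 0) → μ Ψ = 0)
    (φ : C(ℤ_[p], W)) : μ φ = μ (unitsIndicator p W * φ) := by
  have h := hsupp φ (φ - unitsIndicator p W * φ) fun x => by
    by_cases hx : toZMod x = 0 <;> simp [unitsIndicator, hx]
  rwa [map_sub, sub_eq_zero] at h

end UnitsIndicator

section Moments

variable {p : ℕ} [Fact p.Prime] {W : Type*} [NormedCommRing W] [Algebra ℤ_[p] W]
  (hca : Continuous (algebraMap ℤ_[p] W))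

noncomputable def powChooseMap (N k : ℕ) : C(ℤ_[p], W) :=
  ⟨fun x => algebraMap ℤ_[p] W (x ^ N * Ring.choose x k),
    hca.comp ((continuous_pow N).mul (continuous_choose k))⟩

theorem powChooseMap_zero (k : ℕ) : powChooseMap hca 0 k = binomMap p W hca k := by
  ext x
  simp [powChooseMap, binomMap]

theorem powChooseMap_succ (N k : ℕ) :
    powChooseMap hca (N + 1) k
      = (k + 1) • powChooseMap hca N (k + 1) + k • powChooseMap hca N k := by
  ext x
  simp only [powChooseMap, ContinuousMap.add_apply, ContinuousMap.coe_nsmul, Pi.smul_apply,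
    ContinuousMap.coe_mk, ← map_nsmul, ← map_add, ← mul_smul_comm, ← mul_add,
    Ring.succ_nsmul_choose_succ_add_nsmul_choose, pow_succ, mul_assoc]

theorem coeff_theta_iterate (μ : C(ℤ_[p], W) →L[W] W) (F : W⟦X⟧)
    (hF : ∀ k : ℕ, coeff k F = μ (binomMap p W hca k)) (N k : ℕ) :
    coeff k ((theta W)^[N] F) = μ (powChooseMap hca N k) := by
  induction N generalizing k with
  | zero => simp [hF, powChooseMap_zero]
  | succ N ih => rw [Function.iterate_succ_apply', coeff_theta, ih, ih, powChooseMap_succ,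
      map_add, map_nsmul, map_nsmul]

theorem norm_unitsIndicator_mul_sub_le (hnorm : ∀ x : ℤ_[p], ‖algebraMap ℤ_[p] W x‖ ≤ ‖x‖)
    (N m c k : ℕ) :
    ‖unitsIndicator p W *
        (powChooseMap hca (N + (p - 1) * p ^ m * c) k - powChooseMap hca N k)‖
      ≤ (p : ℝ)⁻¹ ^ (m + 1) := by
  refine (ContinuousMap.norm_le _ (by positivity)).mpr fun x => ?_
  by_cases hx : toZMod x = 0
  · simp only [unitsIndicator, ContinuousMap.mul_apply, ContinuousMap.coe_mk, hx, if_true,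
      zero_mul, norm_zero]
    positivity
  · simp only [unitsIndicator, powChooseMap, ContinuousMap.mul_apply, ContinuousMap.sub_apply,
      ContinuousMap.coe_mk, hx, if_false, one_mul, ← map_sub]
    exact (hnorm _).trans (norm_pow_add_mul_sub_pow_mul_le hx _ N m c)

theorem exists_tendsto_unitsIndicator_mul_powChooseMap [CompleteSpace W]
    (hnorm : ∀ x : ℤ_[p], ‖algebraMap ℤ_[p] W x‖ ≤ ‖x‖) (j : ℤ) (k : ℕ) :
    ∃ L : C(ℤ_[p], W), Tendsto (fun i : ℕ => unitsIndicator p W *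
      powChooseMap hca (j + ((p : ℤ) - 1) * (p : ℤ) ^ i).toNat k) atTop (nhds L) := by
  have hp := (Fact.out : p.Prime)
  set i₀ := (-j).toNat
  set g : ℕ → C(ℤ_[p], W) := fun m =>
    unitsIndicator p W * powChooseMap hca (j + ((p : ℤ) - 1) * (p : ℤ) ^ (m + i₀)).toNat k
  have hr : (p : ℝ)⁻¹ < 1 := inv_lt_one_of_one_lt₀ (by exact_mod_cast hp.one_lt)
  have hcauchy : CauchySeq g := by
    refine cauchySeq_of_le_geometric _ ((p : ℝ)⁻¹ ^ (i₀ + 1)) hr fun m => ?_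
    have hi : -j ≤ ((m + i₀ : ℕ) : ℤ) := by omega
    rw [dist_comm, dist_eq_norm, ← mul_sub, add_right_comm,
      toNat_add_sub_one_mul_pow_succ hp.two_le hi]
    calc _ ≤ (p : ℝ)⁻¹ ^ (m + i₀ + 1) := norm_unitsIndicator_mul_sub_le hca hnorm _ _ _ k
      _ = _ := by ring
  obtain ⟨L, hL⟩ := cauchySeq_tendsto_of_complete hcauchy
  exact ⟨L, (tendsto_add_atTop_iff_nat i₀).mp hL⟩

end Moments

theorem statement5_general (p : ℕ) [Fact p.Prime] (W : Type*) [NormedCommRing W] [CompleteSpace W]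
    [Algebra ℤ_[p] W] (hca : Continuous (algebraMap ℤ_[p] W))
    (hnorm : ∀ x : ℤ_[p], ‖algebraMap ℤ_[p] W x‖ ≤ ‖x‖)
    (μ : C(ℤ_[p], W) →L[W] W)
    -- μ is supported on ℤ_p^× :
    (hsupp : ∀ (φ Ψ : C(ℤ_[p], W)),
      (∀ x : ℤ_[p], Ψ x = if PadicInt.toZMod x = 0 then φ x else 0) → μ Ψ = 0)
    -- F is the power series associated with μ :
    (F : PowerSeries W)
    (hF : ∀ k : ℕ, PowerSeries.coeff (R := W) k F = μ (binomMap p W hca k))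
    (j : ℤ) :
    ∃ G : PowerSeries W, ∀ k : ℕ,
      Tendsto (fun i : ℕ =>
          PowerSeries.coeff (R := W) k ((theta W)^[(j + ((p : ℤ) - 1) * (p : ℤ) ^ i).toNat] F))
        atTop (nhds (PowerSeries.coeff (R := W) k G)) := by
  choose L hL using exists_tendsto_unitsIndicator_mul_powChooseMap hca hnorm j
  refine ⟨PowerSeries.mk fun k => μ (L k), fun k => ?_⟩
  simp only [coeff_mk, coeff_theta_iterate hca μ F hF,
    apply_eq_apply_unitsIndicator_mul μ hsupp (powChooseMap hca _ k)]
  exact (μ.continuous.tendsto _).comp (hL k)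

theorem statement5 (p : ℕ) [Fact p.Prime] (W : Type*) [NormedCommRing W] [CompleteSpace W]
    [IsUltrametricDist W] [Algebra ℤ_[p] W] (hca : Continuous (algebraMap ℤ_[p] W))
    (hnorm : ∀ x : ℤ_[p], ‖algebraMap ℤ_[p] W x‖ ≤ ‖x‖)
    (μ : C(ℤ_[p], W) →L[W] W)
    -- μ is supported on ℤ_p^× :
    (hsupp : ∀ (φ Ψ : C(ℤ_[p], W)),
      (∀ x : ℤ_[p], Ψ x = if PadicInt.toZMod x = 0 then φ x else 0) → μ Ψ = 0)
    -- F is the power series associated with μ :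
    (F : PowerSeries W)
    (hF : ∀ k : ℕ, PowerSeries.coeff (R := W) k F = μ (binomMap p W hca k))
    (j : ℤ) (hj : j < 0) :
    ∃ G : PowerSeries W, ∀ k : ℕ,
      Tendsto (fun i : ℕ =>
          PowerSeries.coeff (R := W) k ((theta W)^[(j + ((p : ℤ) - 1) * (p : ℤ) ^ i).toNat] F))
        atTop (nhds (PowerSeries.coeff (R := W) k G)) :=
  statement5_general p W hca hnorm μ hsupp F hF j
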